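/- arXiv:2311.04337 — 4 statements merged into one kernel-verified Lean document; each statement's English description precedes it below -/
import Mathlib

section
/- If a digraph D=(V,A) has minimum dicut size τ and its underlying undirected graph admits a nowhere-zero circular k-flow for some rational k ≥ 2, then A can be partitioned into two arc sets J and A∖J such that both J and A∖J intersect every dicut of D in at least ⌊τ/k⌋ arcs (i.e., both are ⌊τ/k⌋-dijoins). -/
open Finset

variable {V A : Type*} [Fintype V] [DecidableEq V] [Fintype A] [DecidableEq A]

/-- The arcs leaving the vertex set `U`. -/
def outArcs (src tgt : A → V) (U : Finset V) : Finset A :=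
  univ.filter fun a => src a ∈ U ∧ tgt a ∉ U

/-- The arcs entering the vertex set `U`. -/
def inArcs (src tgt : A → V) (U : Finset V) : Finset A :=
  univ.filter fun a => tgt a ∈ U ∧ src a ∉ U

/-- `U` induces a dicut: nonempty, proper, no entering arcs (the dicut is `outArcs U`). -/
def IsDicut (src tgt : A → V) (U : Finset V) : Prop :=
  U.Nonempty ∧ U ≠ univ ∧ inArcs src tgt U = ∅

/-- A dijoin: an arc set meeting every dicut. -/
def IsDijoin (src tgt : A → V) (J : Finset A) : Prop :=
  ∀ U : Finset V, IsDicut src tgt U → (outArcs src tgt U ∩ J).Nonempty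

/-- Tail of an arc under the orientation `o` of the underlying undirected graph. -/
def otail (src tgt : A → V) (o : A → Bool) (a : A) : V := if o a then src a else tgt a

/-- Head of an arc under the orientation `o` of the underlying undirected graph. -/
def ohead (src tgt : A → V) (o : A → Bool) (a : A) : V := if o a then tgt a else src a

/-- The underlying undirected graph admits a nowhere-zero circular `k`-flow: an orientation
`o` of the edges together with a circulation `f` with `1 ≤ f_e ≤ k - 1` everywhere. -/
def HasNZCircularFlow (src tgt : A → V) (k : ℚ) : Prop :=
  ∃ (o : A → Bool) (f : A → ℚ),
    (∀ v : V, ∑ a ∈ univ.filter (fun a => otail src tgt o a = v), f a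
            = ∑ a ∈ univ.filter (fun a => ohead src tgt o a = v), f a) ∧
    ∀ a : A, 1 ≤ f a ∧ f a ≤ k - 1

/-!
Let `J` be the arcs whose direction agrees with the flow orientation `o`. Every arc of a dicut
`δ⁺(U)` leaves `U` in `D`, so under `o` the arcs of `δ⁺(U) ∩ J` leave `U` and those of
`δ⁺(U) \ J` enter it, and no other arc crosses `U`. Flow conservation therefore balances the flow
on `δ⁺(U) ∩ J` against the flow on `δ⁺(U) \ J`; since flow values lie in `[1, k - 1]`, this gives
`|δ⁺(U) \ J| ≤ (k - 1) |δ⁺(U) ∩ J|`, hence `τ ≤ |δ⁺(U)| ≤ k |δ⁺(U) ∩ J|`, and symmetrically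
for the complement of `J`.
-/

omit [Fintype V] [DecidableEq A] in
theorem sum_outArcs_eq_sum_inArcs {M : Type*} [AddCommGroup M] (src tgt : A → V) (f : A → M)
    (hcons : ∀ v : V, ∑ a ∈ univ.filter (fun a => src a = v), f a
      = ∑ a ∈ univ.filter (fun a => tgt a = v), f a)
    (U : Finset V) :
    ∑ a ∈ outArcs src tgt U, f a = ∑ a ∈ inArcs src tgt U, f a := by
  have hcut : ∑ a ∈ univ.filter (fun a => src a ∈ U), f a
      = ∑ a ∈ univ.filter (fun a => tgt a ∈ U), f a := by
    rw [← sum_fiberwise_eq_sum_filter univ U src f, ← sum_fiberwise_eq_sum_filter univ U tgt f]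
    exact sum_congr rfl fun v _ => hcons v
  have hsrc : ∑ a ∈ univ.filter (fun a => src a ∈ U), f a
      = ∑ a ∈ univ.filter (fun a => src a ∈ U ∧ tgt a ∈ U), f a
        + ∑ a ∈ outArcs src tgt U, f a := by
    rw [← sum_filter_add_sum_filter_not _ (fun a => tgt a ∈ U), filter_filter, filter_filter]
    rfl
  have htgt : ∑ a ∈ univ.filter (fun a => tgt a ∈ U), f a
      = ∑ a ∈ univ.filter (fun a => src a ∈ U ∧ tgt a ∈ U), f a
        + ∑ a ∈ inArcs src tgt U, f a := by
    rw [← sum_filter_add_sum_filter_not _ (fun a => src a ∈ U), filter_filter, filter_filter]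
    simp only [and_comm, inArcs]
  rw [hsrc, htgt] at hcut
  exact add_left_cancel hcut

omit [Fintype V] in
theorem outArcs_reorient_of_inArcs_eq_empty (src tgt : A → V) (o : A → Bool) (U : Finset V)
    (hU : inArcs src tgt U = ∅) :
    outArcs (otail src tgt o) (ohead src tgt o) U = outArcs src tgt U ∩ univ.filter (o ·) ∧
    inArcs (otail src tgt o) (ohead src tgt o) U
      = outArcs src tgt U ∩ (univ \ univ.filter (o ·)) := by
  have hno (a : A) : ¬ (tgt a ∈ U ∧ src a ∉ U) := by
    simpa [inArcs] using eq_empty_iff_forall_notMem.1 hU a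
  constructor <;> ext a <;>
    simp only [outArcs, inArcs, mem_filter, mem_inter, mem_sdiff, mem_univ, true_and] <;>
    simp only [otail, ohead] <;> have := hno a <;> cases o a <;> simp <;> tauto

theorem floor_div_le_card_of_sum_eq {ι : Type*} (τ : ℕ) (k : ℚ) (s t : Finset ι) (f : ι → ℚ)
    (hs : ∀ a ∈ s, f a ≤ k - 1) (ht : ∀ a ∈ t, 1 ≤ f a)
    (hsum : ∑ a ∈ s, f a = ∑ a ∈ t, f a) (hτ : τ ≤ #s + #t) :
    ⌊(τ : ℚ) / k⌋ ≤ (#s : ℤ) := by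
  have hτk : (τ : ℚ) ≤ #s * k := calc
    (τ : ℚ) ≤ #s + #t := by exact_mod_cast hτ
    _ ≤ #s + ∑ a ∈ t, f a := by simpa using card_nsmul_le_sum t f 1 ht
    _ ≤ #s + #s * (k - 1) := by
      rw [← hsum]; grw [sum_le_card_nsmul s f _ hs]; simp
    _ = #s * k := by ring
  have hdiv : (τ : ℚ) / k ≤ #s := by
    rcases lt_or_ge k 0 with hk | hk
    · exact (div_nonpos_of_nonneg_of_nonpos τ.cast_nonneg hk.le).trans (#s).cast_nonneg
    · exact div_le_of_le_mul₀ hk (#s).cast_nonneg hτk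
  exact (Int.floor_le_floor hdiv).trans_eq (Int.floor_natCast _)

theorem decompose_into_two_dijoins_general (src tgt : A → V) (τ : ℕ) (k : ℚ)
    (hmin : ∀ U : Finset V, IsDicut src tgt U → τ ≤ (outArcs src tgt U).card)
    (hflow : HasNZCircularFlow src tgt k) :
    ∃ J : Finset A,
      (∀ U : Finset V, IsDicut src tgt U →
        ⌊(τ : ℚ) / k⌋ ≤ ((outArcs src tgt U ∩ J).card : ℤ)) ∧
      (∀ U : Finset V, IsDicut src tgt U →
        ⌊(τ : ℚ) / k⌋ ≤ ((outArcs src tgt U ∩ (univ \ J)).card : ℤ)) := by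
  obtain ⟨o, f, hcons, hf⟩ := hflow
  set J := univ.filter (o ·)
  have hsplit (U : Finset V) (hU : IsDicut src tgt U) :
      τ ≤ #(outArcs src tgt U ∩ J) + #(outArcs src tgt U ∩ (univ \ J)) := by
    rw [← compl_eq_univ_sdiff, ← sdiff_eq_inter_compl, card_inter_add_card_sdiff]
    exact hmin U hU
  have hbalance (U : Finset V) (hU : IsDicut src tgt U) :
      ∑ a ∈ outArcs src tgt U ∩ J, f a = ∑ a ∈ outArcs src tgt U ∩ (univ \ J), f a := by
    obtain ⟨hout, hin⟩ := outArcs_reorient_of_inArcs_eq_empty src tgt o U hU.2.2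
    rw [← hout, ← hin]
    exact sum_outArcs_eq_sum_inArcs _ _ f hcons U
  refine ⟨J, fun U hU => ?_, fun U hU => ?_⟩
  · exact floor_div_le_card_of_sum_eq τ k _ _ f (fun a _ => (hf a).2) (fun a _ => (hf a).1)
      (hbalance U hU) (hsplit U hU)
  · exact floor_div_le_card_of_sum_eq τ k _ _ f (fun a _ => (hf a).2) (fun a _ => (hf a).1)
      (hbalance U hU).symm ((hsplit U hU).trans_eq (add_comm _ _))

/-- If `D` has minimum dicut size `τ` and its underlying undirected graph admits a nowhere-zero
circular `k`-flow (`k ≥ 2` rational), then the arcs can be partitioned into `J` and its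
complement, both of which are `⌊τ/k⌋`-dijoins. -/
theorem decompose_into_two_dijoins (src tgt : A → V) (τ : ℕ) (k : ℚ) (hk : 2 ≤ k)
    (hmin : ∀ U : Finset V, IsDicut src tgt U → τ ≤ (outArcs src tgt U).card)
    (hflow : HasNZCircularFlow src tgt k) :
    ∃ J : Finset A,
      (∀ U : Finset V, IsDicut src tgt U →
        ⌊(τ : ℚ) / k⌋ ≤ ((outArcs src tgt U ∩ J).card : ℤ)) ∧
      (∀ U : Finset V, IsDicut src tgt U →
        ⌊(τ : ℚ) / k⌋ ≤ ((outArcs src tgt U ∩ (univ \ J)).card : ℤ)) :=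
  decompose_into_two_dijoins_general src tgt τ k hmin hflow
end

section
/- Let D=(V,A) be a digraph with minimum dicut size τ and let G⃗ be the digraph on arc set A ∪ A⁻¹ with weight w^D giving weight τ to arcs of A and 1 to arcs of A⁻¹. For any integer k ≤ τ, D contains k pairwise arc-disjoint dijoins if and only if there exist k strongly connected spanning subdigraphs F₁,…,F_k of G⃗ such that each arc e of G⃗ is used by at most w^D(e) of the F_i. -/
open Finset

variable {V A : Type*} [Fintype V] [DecidableEq V] [Fintype A] [DecidableEq A]

/-- Source of an arc in the augmented digraph `A × Bool` (`true` = original copy,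
`false` = reversed copy). -/
def asrc (src tgt : A → V) (p : A × Bool) : V := if p.2 then src p.1 else tgt p.1

/-- Target of an arc in the augmented digraph. -/
def atgt (src tgt : A → V) (p : A × Bool) : V := if p.2 then tgt p.1 else src p.1

/-! A dijoin `J` gives `A ∪ J⁻¹`, and a strongly connected spanning `F` gives `{a | a⁻¹ ∈ F}`.
If no arc of `A` leaves a nonempty proper `U`, then `Uᶜ` is a dicut, so some `a ∈ J` leaves `Uᶜ`
and `a⁻¹` leaves `U`. Conversely, for a dicut `U` no arc of `A` leaves `Uᶜ`, so `F` leaves `Uᶜ`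
through some `a⁻¹`, and `a` lies in the dicut. The weight `1` on reversed arcs is exactly
disjointness; forward arcs are used at most `k ≤ τ` times. -/

def IsStronglyConnectedSpanning (src tgt : A → V) (F : Finset A) : Prop :=
  ∀ U : Finset V, U.Nonempty → U ≠ univ → (outArcs src tgt U ∩ F).Nonempty

theorem Finset.compl_nonempty_iff_ne_univ {α : Type*} [Fintype α] [DecidableEq α]
    (s : Finset α) : sᶜ.Nonempty ↔ s ≠ univ := by
  rw [← compl_ne_univ_iff_nonempty, compl_compl]

section Cuts

omit [DecidableEq A]

variable (src tgt : A → V) (U : Finset V)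

omit [Fintype V] in
@[simp]
theorem mem_outArcs {a : A} : a ∈ outArcs src tgt U ↔ src a ∈ U ∧ tgt a ∉ U := by
  simp [outArcs]

omit [Fintype V] in
@[simp]
theorem mem_inArcs {a : A} : a ∈ inArcs src tgt U ↔ tgt a ∈ U ∧ src a ∉ U := by
  simp [inArcs]

theorem outArcs_compl : outArcs src tgt Uᶜ = inArcs src tgt U := by
  ext a
  simp [and_comm]

theorem inArcs_compl : inArcs src tgt Uᶜ = outArcs src tgt U := by
  ext a
  simp [and_comm]

theorem isDicut_compl_iff :
    IsDicut src tgt Uᶜ ↔ U.Nonempty ∧ U ≠ univ ∧ outArcs src tgt U = ∅ := by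
  rw [IsDicut, inArcs_compl, compl_nonempty_iff_ne_univ, compl_ne_univ_iff_nonempty]
  tauto

end Cuts

section Augmented

variable {src tgt : A → V} {U : Finset V} {a : A}

omit [Fintype V] [DecidableEq A] in
@[simp]
theorem mem_outArcs_augmented_true :
    (a, true) ∈ outArcs (asrc src tgt) (atgt src tgt) U ↔ a ∈ outArcs src tgt U := by
  simp [asrc, atgt]

omit [Fintype V] [DecidableEq A] in
@[simp]
theorem mem_outArcs_augmented_false :
    (a, false) ∈ outArcs (asrc src tgt) (atgt src tgt) U ↔ a ∈ inArcs src tgt U := by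
  simp [asrc, atgt]

/-- `A ∪ J⁻¹` in the augmented digraph. -/
def withReversed (J : Finset A) : Finset (A × Bool) :=
  univ.filter fun p => p.2 = true ∨ p.1 ∈ J

def reversedArcs (F : Finset (A × Bool)) : Finset A :=
  univ.filter fun a => (a, false) ∈ F

theorem IsDijoin.isStronglyConnectedSpanning_withReversed {J : Finset A}
    (hJ : IsDijoin src tgt J) :
    IsStronglyConnectedSpanning (asrc src tgt) (atgt src tgt) (withReversed J) := by
  intro U hU hUne
  obtain ⟨a, ha⟩ | hout := (outArcs src tgt U).eq_empty_or_nonempty.symm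
  · exact ⟨(a, true), mem_inter.2 ⟨mem_outArcs_augmented_true.2 ha, by simp [withReversed]⟩⟩
  · obtain ⟨a, ha⟩ := hJ Uᶜ ((isDicut_compl_iff src tgt U).2 ⟨hU, hUne, hout⟩)
    rw [mem_inter, outArcs_compl] at ha
    exact ⟨(a, false), mem_inter.2 ⟨mem_outArcs_augmented_false.2 ha.1, by simp [withReversed, ha.2]⟩⟩

theorem IsStronglyConnectedSpanning.isDijoin_reversedArcs {F : Finset (A × Bool)}
    (hF : IsStronglyConnectedSpanning (asrc src tgt) (atgt src tgt) F) :
    IsDijoin src tgt (reversedArcs F) := by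
  intro U ⟨hU, hUne, hin⟩
  obtain ⟨⟨a, b⟩, hab⟩ :=
    hF Uᶜ ((compl_nonempty_iff_ne_univ U).2 hUne) ((compl_ne_univ_iff_nonempty U).2 hU)
  obtain ⟨hout, haF⟩ := mem_inter.1 hab
  cases b with
  | true =>
    rw [mem_outArcs_augmented_true, outArcs_compl, hin] at hout
    exact absurd hout (notMem_empty a)
  | false =>
    rw [mem_outArcs_augmented_false, inArcs_compl] at hout
    exact ⟨a, mem_inter.2 ⟨hout, by simpa [reversedArcs] using haF⟩⟩

end Augmented

section Packing

variable {k : ℕ}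

theorem card_filter_mem_withReversed_false_le_one {J : Fin k → Finset A}
    (hJ : Pairwise fun i j => Disjoint (J i) (J j)) (a : A) :
    (univ.filter fun i => (a, false) ∈ withReversed (J i)).card ≤ 1 := by
  refine card_le_one.2 fun i hi j hj => ?_
  simp only [withReversed, mem_filter, mem_univ, true_and, Bool.false_eq_true, false_or] at hi hj
  by_contra hij
  exact disjoint_left.1 (hJ hij) hi hj

theorem disjoint_reversedArcs {F : Fin k → Finset (A × Bool)}
    (hF : ∀ a : A, (univ.filter fun i => (a, false) ∈ F i).card ≤ 1) {i j : Fin k} (hij : i ≠ j) :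
    Disjoint (reversedArcs (F i)) (reversedArcs (F j)) := by
  refine disjoint_left.2 fun a hai haj => hij ?_
  simp only [reversedArcs, mem_filter, mem_univ, true_and] at hai haj
  exact card_le_one.1 (hF a) i (by simpa using hai) j (by simpa using haj)

end Packing

theorem dijoins_iff_scd_packing_general (src tgt : A → V) (τ k : ℕ) (hk : k ≤ τ) :
    (∃ J : Fin k → Finset A,
      (∀ i j, i ≠ j → Disjoint (J i) (J j)) ∧ ∀ i, IsDijoin src tgt (J i))
    ↔
    (∃ F : Fin k → Finset (A × Bool),
      (∀ i, ∀ U : Finset V, U.Nonempty → U ≠ univ →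
        (outArcs (asrc src tgt) (atgt src tgt) U ∩ F i).Nonempty) ∧
      (∀ p : A × Bool, (univ.filter fun i => p ∈ F i).card ≤ if p.2 then τ else 1)) := by
  constructor
  · rintro ⟨J, hdisj, hJ⟩
    refine ⟨fun i => withReversed (J i),
      fun i => (hJ i).isStronglyConnectedSpanning_withReversed, ?_⟩
    rintro ⟨a, _ | _⟩
    · exact card_filter_mem_withReversed_false_le_one (fun i j => hdisj i j) a
    · exact (card_filter_le _ _).trans (by simpa using hk)
  · rintro ⟨F, hF, hmult⟩
    exact ⟨fun i => reversedArcs (F i), fun i j => disjoint_reversedArcs fun a => hmult (a, false),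
      fun i => IsStronglyConnectedSpanning.isDijoin_reversedArcs (hF i)⟩

/-- `D` contains `k` pairwise disjoint dijoins iff the augmented digraph with weights
(`τ` on original arcs, `1` on reverse arcs) packs `k` strongly connected spanning subdigraphs. -/
theorem dijoins_iff_scd_packing (src tgt : A → V) (τ k : ℕ) (hk : k ≤ τ)
    (hmin : ∀ U : Finset V, IsDicut src tgt U → τ ≤ (outArcs src tgt U).card) :
    (∃ J : Fin k → Finset A,
      (∀ i j, i ≠ j → Disjoint (J i) (J j)) ∧ ∀ i, IsDijoin src tgt (J i))
    ↔
    (∃ F : Fin k → Finset (A × Bool),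
      (∀ i, ∀ U : Finset V, U.Nonempty → U ≠ univ →
        (outArcs (asrc src tgt) (atgt src tgt) U ∩ F i).Nonempty) ∧
      (∀ p : A × Bool, (univ.filter fun i => p ∈ F i).card ≤ if p.2 then τ else 1)) :=
  dijoins_iff_scd_packing_general src tgt τ k hk
end

section
/- Let D=(V,A) be a digraph with weights w ∈ {0,1}^A such that every dicut has weight at least τ ≥ 2. If e ∈ A has w_e = 1 and there exists a vertex subset U with δ⁺_D(U) = {e} and w(δ⁻_D(U)) = 0, then e is not contained in any minimum-weight dicut of D. -/
open Finset

variable {V A : Type*} [Fintype V] [DecidableEq V] [Fintype A] [DecidableEq A]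

set_option maxHeartbeats 2000000 in
/-- If every dicut has `w`-weight at least `τ ≥ 2`, `w_e = 1`, and there is a cut `δ(U)` with
`δ⁺(U) = {e}` and `w(δ⁻(U)) = 0`, then `e` lies in no minimum-weight (weight `τ`) dicut. -/
theorem arc_not_in_min_dicut (src tgt : A → V) (w : A → ℕ) (hw : ∀ a, w a ≤ 1)
    (τ : ℕ) (hτ : 2 ≤ τ)
    (hmin : ∀ U : Finset V, IsDicut src tgt U → τ ≤ ∑ a ∈ outArcs src tgt U, w a)
    (e : A) (hwe : w e = 1) (U : Finset V) (hU1 : U.Nonempty) (hU2 : U ≠ univ)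
    (hU3 : outArcs src tgt U = {e}) (hU4 : ∑ a ∈ inArcs src tgt U, w a = 0) :
    ∀ W : Finset V, IsDicut src tgt W → (∑ a ∈ outArcs src tgt W, w a) = τ →
      e ∉ outArcs src tgt W := by
  intro W hW hWτ heW
  obtain ⟨hWne, hWuniv, hWin⟩ := hW
  -- basic facts
  have heWm : src e ∈ W ∧ tgt e ∉ W := by
    simpa [outArcs] using heW
  have heUm : src e ∈ U ∧ tgt e ∉ U := by
    have : e ∈ outArcs src tgt U := by rw [hU3]; simp
    simpa [outArcs] using this
  -- every arc leaving U is e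
  have hUe : ∀ a : A, src a ∈ U → tgt a ∉ U → a = e := by
    intro a h1 h2
    have : a ∈ outArcs src tgt U := by simp [outArcs, h1, h2]
    rw [hU3] at this; simpa using this
  -- no arc enters W
  have hWno : ∀ a : A, tgt a ∈ W → src a ∈ W := by
    intro a h1
    by_contra h2
    have : a ∈ inArcs src tgt W := by simp [inArcs, h1, h2]
    rw [hWin] at this; simpa using this
  set B : Finset V := W \ U with hB
  set P : Finset V := U \ W with hP
  set Q : Finset V := univ \ P with hQ
  -- key pointwise inequality, summed
  have key : (∑ a ∈ outArcs src tgt B, w a) + (∑ a ∈ outArcs src tgt Q, w a) + 1 ≤ τ := by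
    have h1 : (∑ a ∈ outArcs src tgt B, w a) + (∑ a ∈ outArcs src tgt Q, w a) + w e
        ≤ (∑ a ∈ outArcs src tgt W, w a) + (∑ a ∈ inArcs src tgt U, w a) := by
      have hsB : (∑ a ∈ outArcs src tgt B, w a)
          = ∑ a : A, if src a ∈ B ∧ tgt a ∉ B then w a else 0 := by
        rw [outArcs, sum_filter]
      have hsQ : (∑ a ∈ outArcs src tgt Q, w a)
          = ∑ a : A, if src a ∈ Q ∧ tgt a ∉ Q then w a else 0 := by
        rw [outArcs, sum_filter]
      have hsW : (∑ a ∈ outArcs src tgt W, w a)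
          = ∑ a : A, if src a ∈ W ∧ tgt a ∉ W then w a else 0 := by
        rw [outArcs, sum_filter]
      have hsU' : (∑ a ∈ inArcs src tgt U, w a)
          = ∑ a : A, if tgt a ∈ U ∧ src a ∉ U then w a else 0 := by
        rw [inArcs, sum_filter]
      have hwe' : w e = ∑ a : A, if a = e then w a else 0 := by
        rw [Finset.sum_ite_eq' univ e w]; simp
      rw [hsB, hsQ, hsW, hsU', hwe', ← Finset.sum_add_distrib, ← Finset.sum_add_distrib,
        ← Finset.sum_add_distrib]
      apply Finset.sum_le_sum
      intro a _
      simp only [hB, hP, hQ, Finset.mem_sdiff, Finset.mem_univ, true_and]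
      have hw1 := hWno a
      have hw2 := hUe a
      obtain ⟨he1, he2⟩ := heUm
      obtain ⟨he3, he4⟩ := heWm
      by_cases hae : a = e
      · subst hae
        split_ifs <;> first | omega | (exfalso; tauto)
      · split_ifs <;> first | omega | (exfalso; tauto)
    omega
  -- B has no entering arcs
  have hBin : inArcs src tgt B = ∅ := by
    rw [Finset.eq_empty_iff_forall_notMem]
    intro a ha
    simp only [inArcs, Finset.mem_filter, Finset.mem_univ, true_and] at ha
    obtain ⟨ht, hs⟩ := ha
    rw [hB, Finset.mem_sdiff] at ht hs
    have htW : tgt a ∈ W := ht.1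
    have hsW : src a ∈ W := hWno a htW
    have hsU : src a ∈ U := by tauto
    have := hUe a hsU ht.2
    subst this
    exact heWm.2 htW
  -- Q has no entering arcs
  have hQin : inArcs src tgt Q = ∅ := by
    rw [Finset.eq_empty_iff_forall_notMem]
    intro a ha
    simp only [inArcs, Finset.mem_filter, Finset.mem_univ, true_and] at ha
    obtain ⟨ht, hs⟩ := ha
    have hsP : src a ∈ P := by
      by_contra hc
      exact hs (by simp [hQ, hc])
    have htP : tgt a ∉ P := by
      rw [hQ, Finset.mem_sdiff] at ht
      exact ht.2
    rw [hP, Finset.mem_sdiff] at hsP htP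
    by_cases htU : tgt a ∈ U
    · have htW : tgt a ∈ W := by tauto
      exact hsP.2 (hWno a htW)
    · have := hUe a hsP.1 htU
      subst this
      exact hsP.2 heWm.1
  by_cases hBne : B.Nonempty
  · -- B is a dicut of weight < τ
    have hBuniv : B ≠ univ := by
      intro h
      have : src e ∈ B := h ▸ Finset.mem_univ _
      rw [hB, Finset.mem_sdiff] at this
      exact this.2 heUm.1
    have := hmin B ⟨hBne, hBuniv, hBin⟩
    omega
  · by_cases hPne : P.Nonempty
    · -- Q is a dicut of weight < τ
      have hQne : Q.Nonempty := by
        refine ⟨src e, ?_⟩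
        rw [hQ, Finset.mem_sdiff, hP, Finset.mem_sdiff]
        simp [heWm.1]
      have hQuniv : Q ≠ univ := by
        intro h
        obtain ⟨x, hx⟩ := hPne
        have : x ∈ Q := h ▸ Finset.mem_univ _
        rw [hQ, Finset.mem_sdiff] at this
        exact this.2 hx
      have := hmin Q ⟨hQne, hQuniv, hQin⟩
      omega
    · -- U = W, so τ = w e = 1, contradiction
      rw [Finset.not_nonempty_iff_eq_empty] at hBne hPne
      have hUW : U = W := by
        ext x
        constructor
        · intro hx
          by_contra hxW
          exact absurd (hPne ▸ (by rw [hP, Finset.mem_sdiff]; exact ⟨hx, hxW⟩ : x ∈ P))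
            (by simp)
        · intro hx
          by_contra hxU
          exact absurd (hBne ▸ (by rw [hB, Finset.mem_sdiff]; exact ⟨hx, hxU⟩ : x ∈ B))
            (by simp)
      rw [← hUW, hU3] at hWτ
      simp [hwe] at hWτ
      omega
end

section
/- Woodall's conjecture holds for τ = 2: every digraph whose minimum dicut size is 2 contains 2 arc-disjoint dijoins. -/
set_option linter.unusedSectionVars false


open Finset

variable {V A : Type*} [Fintype V] [DecidableEq V] [Fintype A] [DecidableEq A]

namespace Woodall

def wS (src tgt : A → V) (p : A × Bool) : V := if p.2 then src p.1 else tgt p.1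
def wT (src tgt : A → V) (p : A × Bool) : V := if p.2 then tgt p.1 else src p.1

def IsWalk (src tgt : A → V) : V → List (A × Bool) → V → Prop
  | x, [], y => x = y
  | x, p :: L, y => wS src tgt p = x ∧ IsWalk src tgt (wT src tgt p) L y

def Step (src tgt : A → V) (c : A → Bool) (u v : V) : Prop :=
  ∃ b, (c b = true ∧ src b = u ∧ tgt b = v) ∨ (c b = false ∧ src b = v ∧ tgt b = u)

def Reach (src tgt : A → V) (c : A → Bool) : V → V → Prop :=
  Relation.ReflTransGen (Step src tgt c)

variable (src tgt : A → V)

theorem mem_outArcs {U : Finset V} {a : A} :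
    a ∈ outArcs src tgt U ↔ src a ∈ U ∧ tgt a ∉ U := by simp [outArcs]

theorem mem_inArcs {U : Finset V} {a : A} :
    a ∈ inArcs src tgt U ↔ tgt a ∈ U ∧ src a ∉ U := by simp [inArcs]

theorem wT_not (b : A) (s : Bool) : wT src tgt (b, !s) = wS src tgt (b, s) := by
  cases s <;> simp [wS, wT]

theorem isWalk_append {L₁ L₂ : List (A × Bool)} {x y : V} :
    IsWalk src tgt x (L₁ ++ L₂) y ↔ ∃ m, IsWalk src tgt x L₁ m ∧ IsWalk src tgt m L₂ y := by
  induction L₁ generalizing x with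
  | nil => simp [IsWalk]
  | cons p L ih =>
    constructor
    · rintro ⟨h1, h2⟩
      obtain ⟨m, h3, h4⟩ := ih.1 h2
      exact ⟨m, ⟨h1, h3⟩, h4⟩
    · rintro ⟨m, ⟨h1, h2⟩, h3⟩
      exact ⟨h1, ih.2 ⟨m, h2, h3⟩⟩

theorem step_of_color {c : A → Bool} {p : A × Bool} (h : c p.1 = p.2) :
    Step src tgt c (wS src tgt p) (wT src tgt p) := by
  obtain ⟨b, s⟩ := p
  cases s
  · refine ⟨b, Or.inr ⟨h, ?_, ?_⟩⟩ <;> simp [wS, wT]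
  · refine ⟨b, Or.inl ⟨h, ?_, ?_⟩⟩ <;> simp [wS, wT]

theorem reach_of_walk {c : A → Bool} {L : List (A × Bool)} {x y : V}
    (hw : IsWalk src tgt x L y) (hc : ∀ p ∈ L, c p.1 = p.2) :
    Reach src tgt c x y := by
  induction L generalizing x with
  | nil => exact hw ▸ Relation.ReflTransGen.refl
  | cons p L ih =>
    obtain ⟨h1, h2⟩ := hw
    exact Relation.ReflTransGen.head (h1 ▸ step_of_color src tgt (hc p (by simp)))
      (ih h2 fun q hq => hc q (by simp [hq]))

theorem walk_verts {L : List (A × Bool)} {x y : V} (hw : IsWalk src tgt x L y) :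
    ∀ p ∈ L, (wS src tgt p = x ∨ wS src tgt p ∈ L.map (wT src tgt)) ∧
      wT src tgt p ∈ L.map (wT src tgt) := by
  induction L generalizing x with
  | nil => intro p hp; simp at hp
  | cons q L ih =>
    obtain ⟨h1, h2⟩ := hw
    intro p hp
    rcases List.mem_cons.1 hp with h | h
    · subst h; exact ⟨Or.inl h1, by simp⟩
    · obtain ⟨hs, ht⟩ := ih h2 p h
      refine ⟨?_, by simp [ht]⟩
      rcases hs with h' | h'
      · exact Or.inr (by simp [h'])
      · rcases List.mem_map.1 h' with ⟨r, hr1, hr2⟩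
        exact Or.inr (List.mem_map.2 ⟨r, List.mem_cons_of_mem _ hr1, hr2⟩)

theorem exists_nice : ∀ (n : ℕ) (L : List (A × Bool)) (x y : V), L.length ≤ n →
    IsWalk src tgt x L y →
    ∃ L', IsWalk src tgt x L' y ∧ (∀ p ∈ L', p ∈ L) ∧
      ∀ b : A, ¬((b, true) ∈ L' ∧ (b, false) ∈ L') := by
  intro n
  induction n with
  | zero =>
    intro L x y hlen hw
    rw [List.length_eq_zero_iff.1 (Nat.le_zero.1 hlen)] at hw ⊢
    exact ⟨[], hw, fun p hp => hp, fun b => by simp⟩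
  | succ n ih =>
    intro L x y hlen hw
    by_cases hbad : ∃ b : A, (b, true) ∈ L ∧ (b, false) ∈ L
    · obtain ⟨b, ht, hf⟩ := hbad
      have hdec : ∃ (s : Bool) (L₁ L₂ : List (A × Bool)),
          L = L₁ ++ (b, s) :: L₂ ∧ (b, !s) ∈ L₂ := by
        obtain ⟨s₁, t₁, h1⟩ := List.append_of_mem ht
        by_cases h2 : (b, false) ∈ t₁
        · exact ⟨true, s₁, t₁, h1, by simpa using h2⟩
        · have h3 : (b, false) ∈ s₁ := by
            subst h1
            rcases List.mem_append.1 hf with h | h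
            · exact h
            · rcases List.mem_cons.1 h with h' | h'
              · simp at h'
              · exact absurd h' h2
          obtain ⟨s₂, t₂, h4⟩ := List.append_of_mem h3
          refine ⟨false, s₂, t₂ ++ (b, true) :: t₁, ?_, by simp⟩
          subst h1; subst h4; simp
      obtain ⟨s, L₁, L₂, hLeq, hmem⟩ := hdec
      obtain ⟨L₃, L₄, h5⟩ := List.append_of_mem hmem
      subst h5
      rw [hLeq] at hw
      rw [isWalk_append] at hw
      obtain ⟨m, hm1, hm2⟩ := hw
      obtain ⟨hms, hm3⟩ := hm2
      rw [isWalk_append] at hm3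
      obtain ⟨m₂, _, hm5⟩ := hm3
      obtain ⟨hms2, hm6⟩ := hm5
      rw [wT_not] at hm6
      rw [hms] at hm6
      have hw' : IsWalk src tgt x (L₁ ++ L₄) y := (isWalk_append src tgt).2 ⟨m, hm1, hm6⟩
      have hlen' : (L₁ ++ L₄).length ≤ n := by
        rw [hLeq] at hlen; simp at hlen ⊢; omega
      obtain ⟨L', hw'', hsub, hnice⟩ := ih (L₁ ++ L₄) x y hlen' hw'
      refine ⟨L', hw'', fun p hp => ?_, hnice⟩
      have := hsub p hp
      rw [hLeq]
      rcases List.mem_append.1 this with h | h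
      · simp [h]
      · simp [h]
    · push_neg at hbad
      exact ⟨L, hw, fun p hp => hp, fun b hb => hbad b hb.1 hb.2⟩

theorem reach_into {c : A → Bool} {U : Finset V} (hin : inArcs src tgt U = ∅)
    {x y : V} (h : Reach src tgt c x y) :
    x ∉ U → y ∈ U → ∃ b, b ∈ outArcs src tgt U ∧ c b = false := by
  rw [Finset.eq_empty_iff_forall_notMem] at hin
  induction h using Relation.ReflTransGen.head_induction_on with
  | refl => intro hx hy; exact absurd hy hx
  | head hstep _ ih =>
    rename_i u z _
    intro hx hy
    by_cases hz : z ∈ U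
    · obtain ⟨b, hb⟩ := hstep
      rcases hb with ⟨hc, h1, h2⟩ | ⟨hc, h1, h2⟩
      · exact absurd ((mem_inArcs src tgt).2 ⟨h2 ▸ hz, h1 ▸ hx⟩) (hin b)
      · exact ⟨b, (mem_outArcs src tgt).2 ⟨h1 ▸ hz, h2 ▸ hx⟩, hc⟩
    · exact ih hz hy

theorem reach_outof {c : A → Bool} {U : Finset V} (hin : inArcs src tgt U = ∅)
    {x y : V} (h : Reach src tgt c x y) :
    x ∈ U → y ∉ U → ∃ b, b ∈ outArcs src tgt U ∧ c b = true := by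
  rw [Finset.eq_empty_iff_forall_notMem] at hin
  induction h using Relation.ReflTransGen.head_induction_on with
  | refl => intro hx hy; exact absurd hx hy
  | head hstep _ ih =>
    rename_i u z _
    intro hx hy
    by_cases hz : z ∈ U
    · exact ih hz hy
    · obtain ⟨b, hb⟩ := hstep
      rcases hb with ⟨hc, h1, h2⟩ | ⟨hc, h1, h2⟩
      · exact ⟨b, (mem_outArcs src tgt).2 ⟨h1 ▸ hx, h2 ▸ hz⟩, hc⟩
      · exact absurd ((mem_inArcs src tgt).2 ⟨h2 ▸ hx, h1 ▸ hz⟩) (hin b)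

theorem robbins : ∀ (n : ℕ) (src tgt : A → V),
    (univ.filter fun a => src a ≠ tgt a).card ≤ n →
    (∀ U : Finset V, U.Nonempty → U ≠ univ → inArcs src tgt U = ∅ →
      (outArcs src tgt U).Nonempty → 2 ≤ (outArcs src tgt U).card) →
    ∃ c : A → Bool, ∀ a, Reach src tgt c (src a) (tgt a) ∧ Reach src tgt c (tgt a) (src a) := by
  intro n
  induction n with
  | zero =>
    intro src tgt hlen _
    have hall : ∀ a : A, src a = tgt a := by
      intro a
      by_contra h
      have h1 : a ∈ univ.filter fun a => src a ≠ tgt a := by simp [h]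
      have h2 := card_pos.2 ⟨a, h1⟩
      omega
    exact ⟨fun _ => true, fun a => by rw [hall a]; exact ⟨.refl, .refl⟩⟩
  | succ n ih =>
    intro src tgt hlen H
    classical
    by_cases hall : ∀ a : A, src a = tgt a
    · exact ⟨fun _ => true, fun a => by rw [hall a]; exact ⟨.refl, .refl⟩⟩
    push_neg at hall
    obtain ⟨a₀, ha₀⟩ := hall
    set P : V → Prop := fun v => ∃ L, IsWalk src tgt (tgt a₀) L v ∧ ∀ p ∈ L, p.1 ≠ a₀ with hP
    have htgtP : P (tgt a₀) := ⟨[], rfl, by simp⟩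
    have hext1 : ∀ b : A, b ≠ a₀ → P (src b) → P (tgt b) := by
      rintro b hb ⟨L, h1, h2⟩
      refine ⟨L ++ [(b, true)], (isWalk_append src tgt).2
        ⟨src b, h1, by simp [IsWalk, wS, wT]⟩, ?_⟩
      intro p hp
      rcases List.mem_append.1 hp with h | h
      · exact h2 p h
      · simp at h; subst h; exact hb
    have hext2 : ∀ b : A, b ≠ a₀ → P (tgt b) → P (src b) := by
      rintro b hb ⟨L, h1, h2⟩
      refine ⟨L ++ [(b, false)], (isWalk_append src tgt).2
        ⟨tgt b, h1, by simp [IsWalk, wS, wT]⟩, ?_⟩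
      intro p hp
      rcases List.mem_append.1 hp with h | h
      · exact h2 p h
      · simp at h; subst h; exact hb
    have hsrcP : P (src a₀) := by
      by_contra hs
      set W' : Finset V := univ \ (univ.filter P) with hW'
      have hmemW' : ∀ v, v ∈ W' ↔ ¬ P v := by intro v; simp [hW']
      have h1 : src a₀ ∈ W' := (hmemW' _).2 hs
      have h2 : tgt a₀ ∉ W' := fun h => (hmemW' _).1 h htgtP
      have hinW' : inArcs src tgt W' = ∅ := by
        rw [Finset.eq_empty_iff_forall_notMem]
        intro b hb
        rw [mem_inArcs] at hb
        obtain ⟨hbt, hbs⟩ := hb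
        have hPs : P (src b) := by
          by_contra h
          exact hbs ((hmemW' _).2 h)
        have hbne : b ≠ a₀ := by rintro rfl; exact hs hPs
        exact (hmemW' _).1 hbt (hext1 b hbne hPs)
      have houtW' : outArcs src tgt W' = {a₀} := by
        ext b
        rw [mem_outArcs, Finset.mem_singleton]
        constructor
        · rintro ⟨hbs, hbt⟩
          have hPt : P (tgt b) := by
            by_contra h
            exact hbt ((hmemW' _).2 h)
          by_contra hbne
          exact (hmemW' _).1 hbs (hext2 b hbne hPt)
        · rintro rfl; exact ⟨h1, h2⟩
      have hfin := H W' ⟨src a₀, h1⟩ (fun h => h2 (h ▸ mem_univ _)) hinW'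
        (by rw [houtW']; exact ⟨a₀, Finset.mem_singleton_self a₀⟩)
      rw [houtW'] at hfin
      simp at hfin
    obtain ⟨L₀, hL₀, hL₀a⟩ := hsrcP
    obtain ⟨L, hLw, hLsub, hLnice⟩ :=
      exists_nice src tgt L₀.length L₀ (tgt a₀) (src a₀) le_rfl hL₀
    have hLa : ∀ p ∈ L, p.1 ≠ a₀ := fun p hp => hL₀a p (hLsub p hp)
    set CV : Finset V := insert (src a₀) (insert (tgt a₀) (L.map (wT src tgt)).toFinset) with hCV
    set π : V → V := fun v => if v ∈ CV then src a₀ else v with hπ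
    have hπCV : ∀ v ∈ CV, π v = src a₀ := fun v hv => by simp [hπ, hv]
    have hπid : ∀ v, v ∉ CV → π v = v := fun v hv => by simp [hπ, hv]
    have hsrcCV : src a₀ ∈ CV := mem_insert_self _ _
    have htgtCV : tgt a₀ ∈ CV := mem_insert_of_mem (mem_insert_self _ _)
    have hmeas : (univ.filter fun a => π (src a) ≠ π (tgt a)).card ≤ n := by
      have hss : (univ.filter fun a => π (src a) ≠ π (tgt a)) ⊂
          (univ.filter fun a => src a ≠ tgt a) := by
        constructor
        · intro a ha
          simp only [mem_filter, mem_univ, true_and] at ha ⊢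
          intro h; exact ha (by rw [h])
        · intro hsub
          have hmem : a₀ ∈ univ.filter fun a => src a ≠ tgt a := by simp [ha₀]
          have h2 := hsub hmem
          simp only [mem_filter, mem_univ, true_and] at h2
          exact h2 (by rw [hπCV _ hsrcCV, hπCV _ htgtCV])
      have hlt := card_lt_card hss
      omega
    have H' : ∀ U : Finset V, U.Nonempty → U ≠ univ →
        inArcs (fun a => π (src a)) (fun a => π (tgt a)) U = ∅ →
        (outArcs (fun a => π (src a)) (fun a => π (tgt a)) U).Nonempty →
        2 ≤ (outArcs (fun a => π (src a)) (fun a => π (tgt a)) U).card := by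
      intro U hne hproper hin hout
      set Ub : Finset V := univ.filter (fun v => π v ∈ U) with hUb
      have hout_eq : outArcs src tgt Ub = outArcs (fun a => π (src a)) (fun a => π (tgt a)) U := by
        ext b; simp [outArcs, hUb]
      have hin_eq : inArcs src tgt Ub = inArcs (fun a => π (src a)) (fun a => π (tgt a)) U := by
        ext b; simp [inArcs, hUb]
      obtain ⟨a, ha⟩ := hout
      rw [mem_outArcs] at ha
      have h1 : src a ∈ Ub := by simp [hUb, ha.1]
      have h2 : tgt a ∉ Ub := by simp [hUb]; exact ha.2
      rw [← hout_eq]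
      refine H Ub ⟨src a, h1⟩ (fun h => h2 (h ▸ mem_univ _)) (by rw [hin_eq]; exact hin) ?_
      rw [hout_eq]
      exact ⟨a, (mem_outArcs _ _).2 ha⟩
    obtain ⟨c', hc'⟩ := ih (fun a => π (src a)) (fun a => π (tgt a)) hmeas H'
    set c : A → Bool := fun a =>
      if a = a₀ then true
      else if (a, true) ∈ L then true
      else if (a, false) ∈ L then false
      else c' a with hc
    have hc₀ : c a₀ = true := by simp [hc]
    have hcL : ∀ p ∈ L, c p.1 = p.2 := by
      rintro ⟨b, s⟩ hp
      have hb : b ≠ a₀ := hLa _ hp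
      cases s
      · have ht : (b, true) ∉ L := fun h => hLnice b ⟨h, hp⟩
        simp [hc, hb, ht, hp]
      · simp [hc, hb, hp]
    have hcnc : ∀ b : A, b ≠ a₀ → (b, true) ∉ L → (b, false) ∉ L → c b = c' b := by
      intro b h1 h2 h3; simp [hc, h1, h2, h3]
    have hends : ∀ p ∈ L, wS src tgt p ∈ CV ∧ wT src tgt p ∈ CV := by
      intro p hp
      obtain ⟨hs, ht⟩ := walk_verts src tgt hLw p hp
      constructor
      · rcases hs with h | h
        · rw [h]; exact htgtCV
        · exact mem_insert_of_mem (mem_insert_of_mem (List.mem_toFinset.2 h))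
      · exact mem_insert_of_mem (mem_insert_of_mem (List.mem_toFinset.2 ht))
    have harc : ∀ b : A, (b = a₀ ∨ (b, true) ∈ L ∨ (b, false) ∈ L) →
        src b ∈ CV ∧ tgt b ∈ CV := by
      intro b hb
      rcases hb with rfl | h | h
      · exact ⟨hsrcCV, htgtCV⟩
      · have h2 := hends (b, true) h
        exact ⟨by simpa [wS] using h2.1, by simpa [wT] using h2.2⟩
      · have h2 := hends (b, false) h
        exact ⟨by simpa [wT] using h2.2, by simpa [wS] using h2.1⟩
    have hstep0 : Reach src tgt c (src a₀) (tgt a₀) :=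
      Relation.ReflTransGen.single ⟨a₀, Or.inl ⟨hc₀, rfl, rfl⟩⟩
    have hwreach : Reach src tgt c (tgt a₀) (src a₀) := reach_of_walk src tgt hLw hcL
    have hcyc : ∀ v ∈ CV, Reach src tgt c v (src a₀) ∧ Reach src tgt c (src a₀) v := by
      intro v hv
      rcases mem_insert.1 hv with rfl | hv
      · exact ⟨.refl, .refl⟩
      rcases mem_insert.1 hv with rfl | hv
      · exact ⟨hwreach, hstep0⟩
      obtain ⟨p, hp, hpv⟩ := List.mem_map.1 (List.mem_toFinset.1 hv)
      obtain ⟨L₁, L₂, hdec⟩ := List.append_of_mem hp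
      have hLw2 := hLw
      rw [hdec] at hLw2
      obtain ⟨m, hw1, hw2⟩ := (isWalk_append src tgt).1 hLw2
      obtain ⟨hw3, hw4⟩ := hw2
      have hr1 : Reach src tgt c v (src a₀) := by
        rw [← hpv]
        exact reach_of_walk src tgt hw4 (fun q hq => hcL q (by rw [hdec]; simp [hq]))
      have hr2 : Reach src tgt c (tgt a₀) v := by
        have hm : Reach src tgt c (tgt a₀) m :=
          reach_of_walk src tgt hw1 (fun q hq => hcL q (by rw [hdec]; simp [hq]))
        have hst : Step src tgt c m v := by
          rw [← hpv, ← hw3]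
          exact step_of_color src tgt (hcL p (by rw [hdec]; simp))
        exact hm.tail hst
      exact ⟨hr1, hstep0.trans hr2⟩
    have hclass : ∀ u v : V, π u = π v → Reach src tgt c u v := by
      intro u v huv
      by_cases hu : u ∈ CV
      · by_cases hv : v ∈ CV
        · exact (hcyc u hu).1.trans (hcyc v hv).2
        · rw [hπCV u hu, hπid v hv] at huv
          rw [← huv]
          exact (hcyc u hu).1
      · by_cases hv : v ∈ CV
        · rw [hπid u hu, hπCV v hv] at huv
          rw [huv]
          exact (hcyc v hv).2
        · rw [hπid u hu, hπid v hv] at huv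
          rw [huv]
          exact .refl
    have hlift : ∀ p q : V,
        Relation.ReflTransGen (Step (fun a => π (src a)) (fun a => π (tgt a)) c') p q →
        ∀ x y : V, π x = p → π y = q → Reach src tgt c x y := by
      intro p q h
      induction h with
      | refl => intro x y hx hy; exact hclass x y (hx.trans hy.symm)
      | @tail r' q' h1 h2 ih2 =>
        intro x y hx hy
        obtain ⟨b, hb⟩ := h2
        by_cases hcb : b = a₀ ∨ (b, true) ∈ L ∨ (b, false) ∈ L
        · have hbb := harc b hcb
          have heq : π (src b) = π (tgt b) := by rw [hπCV _ hbb.1, hπCV _ hbb.2]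
          rcases hb with ⟨_, e1, e2⟩ | ⟨_, e1, e2⟩
          · have e1' : π (src b) = r' := e1
            have e2' : π (tgt b) = q' := e2
            exact ih2 x y hx (by rw [hy, ← e2', ← heq]; exact e1')
          · have e1' : π (src b) = q' := e1
            have e2' : π (tgt b) = r' := e2
            exact ih2 x y hx (by rw [hy, ← e1', heq]; exact e2')
        · push_neg at hcb
          have hcb2 : c b = c' b := hcnc b hcb.1 hcb.2.1 hcb.2.2
          rcases hb with ⟨e0, e1, e2⟩ | ⟨e0, e1, e2⟩
          · have e1' : π (src b) = r' := e1
            have e2' : π (tgt b) = q' := e2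
            have hr : Reach src tgt c x (src b) := ih2 x (src b) hx e1'
            have hst : Step src tgt c (src b) (tgt b) :=
              ⟨b, Or.inl ⟨by rw [hcb2]; exact e0, rfl, rfl⟩⟩
            exact (hr.tail hst).trans (hclass (tgt b) y (e2'.trans hy.symm))
          · have e1' : π (src b) = q' := e1
            have e2' : π (tgt b) = r' := e2
            have hr : Reach src tgt c x (tgt b) := ih2 x (tgt b) hx e2'
            have hst : Step src tgt c (tgt b) (src b) :=
              ⟨b, Or.inr ⟨by rw [hcb2]; exact e0, rfl, rfl⟩⟩
            exact (hr.tail hst).trans (hclass (src b) y (e1'.trans hy.symm))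
    refine ⟨c, fun a => ?_⟩
    obtain ⟨g1, g2⟩ := hc' a
    exact ⟨hlift _ _ g1 (src a) (tgt a) rfl rfl, hlift _ _ g2 (tgt a) (src a) rfl rfl⟩

end Woodall

/-- Woodall's conjecture holds for `τ = 2`: every digraph whose dicuts all have size at least `2`
contains two arc-disjoint dijoins. -/
theorem woodall_tau_two (src tgt : A → V)
    (hmin : ∀ U : Finset V, IsDicut src tgt U → 2 ≤ (outArcs src tgt U).card) :
    ∃ J₁ J₂ : Finset A, Disjoint J₁ J₂ ∧ IsDijoin src tgt J₁ ∧ IsDijoin src tgt J₂ := by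
  classical
  obtain ⟨c, hc⟩ := Woodall.robbins (univ.filter fun a => src a ≠ tgt a).card src tgt le_rfl
    (fun U h1 h2 h3 _ => hmin U ⟨h1, h2, h3⟩)
  refine ⟨univ.filter (fun a => c a = true), univ.filter (fun a => c a = false), ?_, ?_, ?_⟩
  · rw [Finset.disjoint_left]
    intro a h1 h2
    simp only [Finset.mem_filter, Finset.mem_univ, true_and] at h1 h2
    rw [h1] at h2
    exact Bool.noConfusion h2
  · intro U hU
    obtain ⟨hne, hproper, hin⟩ := hU
    have h2 := hmin U ⟨hne, hproper, hin⟩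
    have hout : (outArcs src tgt U).Nonempty := card_pos.1 (by omega)
    obtain ⟨a, ha⟩ := hout
    rw [Woodall.mem_outArcs] at ha
    obtain ⟨b, hb1, hb2⟩ := Woodall.reach_outof src tgt hin (hc a).1 ha.1 ha.2
    exact ⟨b, Finset.mem_inter.2 ⟨hb1, by simp [hb2]⟩⟩
  · intro U hU
    obtain ⟨hne, hproper, hin⟩ := hU
    have h2 := hmin U ⟨hne, hproper, hin⟩
    have hout : (outArcs src tgt U).Nonempty := card_pos.1 (by omega)
    obtain ⟨a, ha⟩ := hout
    rw [Woodall.mem_outArcs] at ha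
    obtain ⟨b, hb1, hb2⟩ := Woodall.reach_into src tgt hin (hc a).2 ha.2 ha.1
    exact ⟨b, Finset.mem_inter.2 ⟨hb1, by simp [hb2]⟩⟩
end
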